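/- arXiv:1002.0945 — 5 statements merged into one kernel-verified Lean document; each statement's English description precedes it below -/
import Mathlib

section
/- For every natural number n the following identity holds in F: (1/Π)·[x₁^{n+1}(x₁+y)(x₂−x₃) + x₂^{n+1}(x₂+y)(x₃−x₁) + x₃^{n+1}(x₃+y)(x₁−x₂)] = (R/Π)·[(x₂^{n+1}−x₃^{n+1})/(x₁+y) + (x₃^{n+1}−x₁^{n+1})/(x₂+y) + (x₁^{n+1}−x₂^{n+1})/(x₃+y)]. (The left side is Macdonald's expression for the character of the simple summand I_{(n,0,0,0)} of tensor powers of the (3|1)-dimensional super vector space; the right side is the Su–Zhang atypical character formula for the irreducible gl(3|1)-module V(n,0,0|0), the case λ₃ = λ₄ of the atypicality condition.) -/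
noncomputable section

/-- The field of rational functions over ℚ in four variables. -/
abbrev F : Type := FractionRing (MvPolynomial (Fin 4) ℚ)

def x1 : F := algebraMap (MvPolynomial (Fin 4) ℚ) F (MvPolynomial.X 0)
def x2 : F := algebraMap (MvPolynomial (Fin 4) ℚ) F (MvPolynomial.X 1)
def x3 : F := algebraMap (MvPolynomial (Fin 4) ℚ) F (MvPolynomial.X 2)
def y  : F := algebraMap (MvPolynomial (Fin 4) ℚ) F (MvPolynomial.X 3)

/-- `R = (x₁+y)(x₂+y)(x₃+y)`. -/
def R : F := (x1 + y) * (x2 + y) * (x3 + y)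

/-- `Π = (x₁−x₂)(x₂−x₃)(x₁−x₃)`. -/
def P : F := (x1 - x2) * (x2 - x3) * (x1 - x3)

/-- `a(t,u,v)` : determinant of the 3×3 matrix with `i`-th row `(xᵢ^{t+2}, xᵢ^{u+1}, xᵢ^v)`. -/
def a (t u v : ℤ) : F :=
  Matrix.det !![x1 ^ (t+2), x1 ^ (u+1), x1 ^ v;
                x2 ^ (t+2), x2 ^ (u+1), x2 ^ v;
                x3 ^ (t+2), x3 ^ (u+1), x3 ^ v]

/-- Complete homogeneous symmetric polynomial of degree `k` in three variables
(`0` for `k < 0`). -/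
def hc (u v w : F) (k : ℤ) : F :=
  if k < 0 then 0
  else ∑ i ∈ Finset.range (k.toNat + 1), ∑ j ∈ Finset.range (k.toNat - i + 1),
    u ^ i * v ^ j * w ^ (k.toNat - i - j)

def h (k : ℤ) : F := hc x1 x2 x3 k

def hbar (k : ℤ) : F := hc x1⁻¹ x2⁻¹ x3⁻¹ k

/-- Elementary symmetric polynomials in `x₁, x₂, x₃`. -/
def e : ℕ → F
  | 0 => 1
  | 1 => x1 + x2 + x3
  | 2 => x1*x2 + x1*x3 + x2*x3
  | 3 => x1*x2*x3
  | _ => 0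

/-- Character of the `j`-th super exterior power `Λ_j`. -/
def lamCh (j : ℕ) : F := ∑ r ∈ Finset.range (min 3 j + 1), e r * y ^ (j - r)

/-- Character of the dual `S_j*` of the `j`-th super symmetric power. -/
def sBarCh (j : ℕ) : F := hbar j + y⁻¹ * hbar ((j : ℤ) - 1)

/-- Schur polynomial: `s_μ · Π = det (xᵢ^{μⱼ+3−j})`. -/
def schur (m1 m2 m3 : ℤ) : F := a m1 m2 m3 / P

set_option maxHeartbeats 1000000 in
/-- Macdonald's expression for `ch I_{(n,0,0,0)}` equals the Su–Zhang character of
`V(n,0,0|0)`. -/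
theorem stmt_2 (n : ℕ) :
    (1 / P) * (x1 ^ (n+1) * (x1 + y) * (x2 - x3)
              + x2 ^ (n+1) * (x2 + y) * (x3 - x1)
              + x3 ^ (n+1) * (x3 + y) * (x1 - x2))
    = (R / P) * ((x2 ^ (n+1) - x3 ^ (n+1)) / (x1 + y)
               + (x3 ^ (n+1) - x1 ^ (n+1)) / (x2 + y)
               + (x1 ^ (n+1) - x2 ^ (n+1)) / (x3 + y)) := by
  have key : ∀ p : MvPolynomial (Fin 4) ℚ,
      MvPolynomial.eval (fun i => ((i : Fin 4).val : ℚ)) p ≠ 0 →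
      algebraMap (MvPolynomial (Fin 4) ℚ) F p ≠ 0 := by
    intro p hp h0
    have hpz : p = 0 := by
      have := IsFractionRing.injective (MvPolynomial (Fin 4) ℚ) F
      exact this (by simpa using h0)
    rw [hpz] at hp
    simp at hp
  have h1 : x1 + y ≠ 0 := by
    rw [show x1 + y = algebraMap (MvPolynomial (Fin 4) ℚ) F
      (MvPolynomial.X 0 + MvPolynomial.X 3) by rw [map_add]; rfl]
    exact key _ (by norm_num [show ((3:Fin 4):ℕ) = 3 from rfl, show ((2:Fin 4):ℕ) = 2 from rfl, show ((1:Fin 4):ℕ) = 1 from rfl, show ((0:Fin 4):ℕ) = 0 from rfl])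
  have h2 : x2 + y ≠ 0 := by
    rw [show x2 + y = algebraMap (MvPolynomial (Fin 4) ℚ) F
      (MvPolynomial.X 1 + MvPolynomial.X 3) by rw [map_add]; rfl]
    exact key _ (by norm_num [show ((3:Fin 4):ℕ) = 3 from rfl, show ((2:Fin 4):ℕ) = 2 from rfl, show ((1:Fin 4):ℕ) = 1 from rfl, show ((0:Fin 4):ℕ) = 0 from rfl])
  have h3 : x3 + y ≠ 0 := by
    rw [show x3 + y = algebraMap (MvPolynomial (Fin 4) ℚ) F
      (MvPolynomial.X 2 + MvPolynomial.X 3) by rw [map_add]; rfl]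
    exact key _ (by norm_num [show ((3:Fin 4):ℕ) = 3 from rfl, show ((2:Fin 4):ℕ) = 2 from rfl, show ((1:Fin 4):ℕ) = 1 from rfl, show ((0:Fin 4):ℕ) = 0 from rfl])
  have d12 : x1 - x2 ≠ 0 := by
    rw [show x1 - x2 = algebraMap (MvPolynomial (Fin 4) ℚ) F
      (MvPolynomial.X 0 - MvPolynomial.X 1) by rw [map_sub]; rfl]
    exact key _ (by norm_num [show ((3:Fin 4):ℕ) = 3 from rfl, show ((2:Fin 4):ℕ) = 2 from rfl, show ((1:Fin 4):ℕ) = 1 from rfl, show ((0:Fin 4):ℕ) = 0 from rfl])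
  have d23 : x2 - x3 ≠ 0 := by
    rw [show x2 - x3 = algebraMap (MvPolynomial (Fin 4) ℚ) F
      (MvPolynomial.X 1 - MvPolynomial.X 2) by rw [map_sub]; rfl]
    exact key _ (by norm_num [show ((3:Fin 4):ℕ) = 3 from rfl, show ((2:Fin 4):ℕ) = 2 from rfl, show ((1:Fin 4):ℕ) = 1 from rfl, show ((0:Fin 4):ℕ) = 0 from rfl])
  have d13 : x1 - x3 ≠ 0 := by
    rw [show x1 - x3 = algebraMap (MvPolynomial (Fin 4) ℚ) F
      (MvPolynomial.X 0 - MvPolynomial.X 2) by rw [map_sub]; rfl]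
    exact key _ (by norm_num [show ((3:Fin 4):ℕ) = 3 from rfl, show ((2:Fin 4):ℕ) = 2 from rfl, show ((1:Fin 4):ℕ) = 1 from rfl, show ((0:Fin 4):ℕ) = 0 from rfl])
  have hP : P ≠ 0 := by
    unfold P
    exact mul_ne_zero (mul_ne_zero d12 d23) d13
  rw [R, P] at *
  field_simp
  ring
end
end

section
/- For every natural number n the following identity holds in F: h_n + y·h_{n−1} = (R/Π)·[(x₂^{n+1}−x₃^{n+1})/(x₁+y) + (x₃^{n+1}−x₁^{n+1})/(x₂+y) + (x₁^{n+1}−x₂^{n+1})/(x₃+y)]. (The left side is the character of the n-th super symmetric power Sₙ = I_{(n,0,0,0)} of the (3|1)-dimensional super vector space; the right side is the Su–Zhang character of the atypical irreducible gl(3|1)-module V(n,0,0|0).) -/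
noncomputable section

-- auxiliary lemmas to insert above stmt_3

noncomputable def G (n : ℕ) : F := ∑ j ∈ Finset.range (n+1), x2 ^ j * x3 ^ (n - j)

noncomputable def HH (n : ℕ) : F :=
  ∑ i ∈ Finset.range (n+1), ∑ j ∈ Finset.range (n - i + 1), x1 ^ i * x2 ^ j * x3 ^ (n - i - j)

lemma h_cast (n : ℕ) : h (n : ℤ) = HH n := by
  unfold h hc HH
  rw [if_neg (by omega)]
  simp [Int.toNat_natCast]

lemma h_neg_one : h (-1) = 0 := by
  unfold h hc
  rw [if_pos (by omega)]

lemma G_rec (n : ℕ) : G (n+1) = x3 * G n + x2 ^ (n+1) := by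
  unfold G
  rw [Finset.sum_range_succ]
  simp only [Nat.sub_self, pow_zero, mul_one, Finset.mul_sum]
  congr 1
  refine Finset.sum_congr rfl fun j hj => ?_
  have hjn : j ≤ n := by simpa using Nat.lt_succ_iff.mp (Finset.mem_range.mp hj)
  rw [Nat.succ_sub hjn, pow_succ]
  ring

lemma G_mul (n : ℕ) : (x2 - x3) * G n = x2 ^ (n+1) - x3 ^ (n+1) := by
  induction n with
  | zero => simp [G]
  | succ m ih =>
    rw [G_rec]
    linear_combination x3 * ih

lemma HH_rec (n : ℕ) : HH (n+1) = x1 * HH n + G (n+1) := by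
  unfold HH G
  rw [Finset.sum_range_succ']
  congr 1
  · rw [Finset.mul_sum]
    refine Finset.sum_congr rfl fun i _ => ?_
    have h1 : n + 1 - (i+1) = n - i := by omega
    rw [h1, Finset.mul_sum]
    refine Finset.sum_congr rfl fun j _ => ?_
    rw [pow_succ]
    ring
  · simp

lemma bialt (n : ℕ) :
    P * HH n = x1 ^ (n+2) * (x2 - x3) - x2 ^ (n+2) * (x1 - x3) + x3 ^ (n+2) * (x1 - x2) := by
  induction n with
  | zero =>
    have : HH 0 = 1 := by simp [HH]
    rw [this]
    unfold P
    ring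
  | succ m ih =>
    rw [HH_rec]
    have hg := G_mul (m+1)
    unfold P at ih ⊢
    linear_combination x1 * ih + (x1 - x2) * (x1 - x3) * hg

lemma alg_ne (p : MvPolynomial (Fin 4) ℚ)
    (hp : MvPolynomial.eval (fun i : Fin 4 => ((i : ℕ) : ℚ) + 1) p ≠ 0) :
    algebraMap (MvPolynomial (Fin 4) ℚ) F p ≠ 0 := by
  intro h
  apply hp
  have : p = 0 := by
    have := IsFractionRing.injective (MvPolynomial (Fin 4) ℚ) F
    exact this (by simpa using h)
  simp [this]

lemma ne12 : x1 - x2 ≠ 0 := by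
  have := alg_ne (MvPolynomial.X 0 - MvPolynomial.X 1) (by norm_num [show ((0:Fin 4):ℕ) = 0 from rfl, show ((1:Fin 4):ℕ) = 1 from rfl, show ((2:Fin 4):ℕ) = 2 from rfl, show ((3:Fin 4):ℕ) = 3 from rfl])
  simpa [x1, x2, map_sub] using this

lemma ne23 : x2 - x3 ≠ 0 := by
  have := alg_ne (MvPolynomial.X 1 - MvPolynomial.X 2) (by norm_num [show ((0:Fin 4):ℕ) = 0 from rfl, show ((1:Fin 4):ℕ) = 1 from rfl, show ((2:Fin 4):ℕ) = 2 from rfl, show ((3:Fin 4):ℕ) = 3 from rfl])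
  simpa [x2, x3, map_sub] using this

lemma ne13 : x1 - x3 ≠ 0 := by
  have := alg_ne (MvPolynomial.X 0 - MvPolynomial.X 2) (by norm_num [show ((0:Fin 4):ℕ) = 0 from rfl, show ((1:Fin 4):ℕ) = 1 from rfl, show ((2:Fin 4):ℕ) = 2 from rfl, show ((3:Fin 4):ℕ) = 3 from rfl])
  simpa [x1, x3, map_sub] using this

lemma ne1y : x1 + y ≠ 0 := by
  have := alg_ne (MvPolynomial.X 0 + MvPolynomial.X 3) (by norm_num [show ((0:Fin 4):ℕ) = 0 from rfl, show ((1:Fin 4):ℕ) = 1 from rfl, show ((2:Fin 4):ℕ) = 2 from rfl, show ((3:Fin 4):ℕ) = 3 from rfl])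
  simpa [x1, y, map_add] using this

lemma ne2y : x2 + y ≠ 0 := by
  have := alg_ne (MvPolynomial.X 1 + MvPolynomial.X 3) (by norm_num [show ((0:Fin 4):ℕ) = 0 from rfl, show ((1:Fin 4):ℕ) = 1 from rfl, show ((2:Fin 4):ℕ) = 2 from rfl, show ((3:Fin 4):ℕ) = 3 from rfl])
  simpa [x2, y, map_add] using this

lemma ne3y : x3 + y ≠ 0 := by
  have := alg_ne (MvPolynomial.X 2 + MvPolynomial.X 3) (by norm_num [show ((0:Fin 4):ℕ) = 0 from rfl, show ((1:Fin 4):ℕ) = 1 from rfl, show ((2:Fin 4):ℕ) = 2 from rfl, show ((3:Fin 4):ℕ) = 3 from rfl])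
  simpa [x3, y, map_add] using this

lemma neP : P ≠ 0 := by
  unfold P
  exact mul_ne_zero (mul_ne_zero ne12 ne23) ne13

set_option maxHeartbeats 2000000 in
/-- `ch Sₙ = hₙ + y·h_{n−1}` equals the Su–Zhang character of `V(n,0,0|0)`. -/
theorem stmt_3 (n : ℕ) :
    h n + y * h ((n : ℤ) - 1)
    = (R / P) * ((x2 ^ (n+1) - x3 ^ (n+1)) / (x1 + y)
               + (x3 ^ (n+1) - x1 ^ (n+1)) / (x2 + y)
               + (x1 ^ (n+1) - x2 ^ (n+1)) / (x3 + y)) := by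
  have key : P * (h n + y * h ((n : ℤ) - 1))
      = (x2+y)*(x3+y)*(x2^(n+1)-x3^(n+1)) + (x1+y)*(x3+y)*(x3^(n+1)-x1^(n+1))
        + (x1+y)*(x2+y)*(x1^(n+1)-x2^(n+1)) := by
    cases n with
    | zero =>
      rw [show ((0:ℕ):ℤ) - 1 = -1 by norm_num, h_neg_one, h_cast]
      have h0 : HH 0 = 1 := by simp [HH]
      rw [h0]; unfold P; ring
    | succ m =>
      rw [show (((m+1:ℕ)):ℤ) - 1 = (m:ℤ) by push_cast; ring, h_cast, h_cast]
      have b1 := bialt (m+1)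
      have b0 := bialt m
      unfold P at b1 b0 ⊢
      linear_combination b1 + y * b0
  have hrhs : (R / P) * ((x2^(n+1)-x3^(n+1))/(x1+y) + (x3^(n+1)-x1^(n+1))/(x2+y)
        + (x1^(n+1)-x2^(n+1))/(x3+y))
      = ((x2+y)*(x3+y)*(x2^(n+1)-x3^(n+1)) + (x1+y)*(x3+y)*(x3^(n+1)-x1^(n+1))
        + (x1+y)*(x2+y)*(x1^(n+1)-x2^(n+1))) / P := by
    unfold R
    rw [div_add_div _ _ ne1y ne2y, div_add_div _ _ (mul_ne_zero ne1y ne2y) ne3y,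
      div_mul_div_comm,
      div_eq_div_iff (mul_ne_zero neP (mul_ne_zero (mul_ne_zero ne1y ne2y) ne3y)) neP]
    ring
  rw [hrhs, eq_div_iff neP]
  linear_combination key
end
end

section
/- For every integer n ≥ 1 the following identity holds in F: R/(Π·y)·[x₁(x₂^{−n}x₃ − x₂x₃^{−n})/(x₁+y) + x₂(x₃^{−n}x₁ − x₃x₁^{−n})/(x₂+y) + x₃(x₁^{−n}x₂ − x₁x₂^{−n})/(x₃+y)] = (1/(Π·y))·[(x₁^{1−n}(x₂²x₃−x₂x₃²) + x₂^{1−n}(x₃²x₁−x₃x₁²) + x₃^{1−n}(x₁²x₂−x₁x₂²)) + y·(x₁^{−n}(x₂²x₃−x₂x₃²) + x₂^{−n}(x₃²x₁−x₃x₁²) + x₃^{−n}(x₁²x₂−x₁x₂²))]. (The left side is the Su–Zhang atypical character formula at the weight (0,0,1−n|1), the case λ₂+1 = λ₄; the right side is the computed character of the dual module I*_{(n,0,0,0)}; the identity shows ch I*_{(n,0,0,0)} = ch V(0,0,−n+1|1).) -/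
noncomputable section

lemma nz_of_eval (p : MvPolynomial (Fin 4) ℚ) (s : Fin 4 → ℚ)
    (h : MvPolynomial.eval s p ≠ 0) : algebraMap (MvPolynomial (Fin 4) ℚ) F p ≠ 0 := by
  intro hp
  apply h
  have : p = 0 := (IsFractionRing.injective (MvPolynomial (Fin 4) ℚ) F) (by simpa using hp)
  simp [this]

lemma nz_aux : x1 ≠ 0 ∧ x2 ≠ 0 ∧ x3 ≠ 0 ∧ y ≠ 0 ∧ (x1 + y) ≠ 0 ∧ (x2 + y) ≠ 0 ∧
    (x3 + y) ≠ 0 ∧ (x1 - x2) ≠ 0 ∧ (x2 - x3) ≠ 0 ∧ (x1 - x3) ≠ 0 := by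
  have s : Fin 4 → ℚ := ![1, 2, 4, 8]
  refine ⟨?_, ?_, ?_, ?_, ?_, ?_, ?_, ?_, ?_, ?_⟩ <;>
    simp only [x1, x2, x3, y, ← map_add, ← map_sub] <;>
    apply nz_of_eval _ ![1, 2, 4, 8] <;>
    simp <;> norm_num

/-- `ch I*_{(n,0,0,0)} = ch V(0,0,−n+1|1)`: the Su–Zhang atypical character formula at the
weight `(0,0,1−n|1)` equals the computed character of the dual module `I*_{(n,0,0,0)}`. -/
theorem stmt_4 (n : ℤ) (hn : 1 ≤ n) :
    R / (P * y) * (x1 * (x2 ^ (-n) * x3 - x2 * x3 ^ (-n)) / (x1 + y)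
                 + x2 * (x3 ^ (-n) * x1 - x3 * x1 ^ (-n)) / (x2 + y)
                 + x3 * (x1 ^ (-n) * x2 - x1 * x2 ^ (-n)) / (x3 + y))
    = (1 / (P * y)) *
      ((x1 ^ (1-n) * (x2^2*x3 - x2*x3^2) + x2 ^ (1-n) * (x3^2*x1 - x3*x1^2)
         + x3 ^ (1-n) * (x1^2*x2 - x1*x2^2))
       + y * (x1 ^ (-n) * (x2^2*x3 - x2*x3^2) + x2 ^ (-n) * (x3^2*x1 - x3*x1^2)
         + x3 ^ (-n) * (x1^2*x2 - x1*x2^2))) := by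
  obtain ⟨h1, h2, h3, hy, h1y, h2y, h3y, h12, h23, h13⟩ := nz_aux
  have hP : P ≠ 0 := by
    unfold P; exact mul_ne_zero (mul_ne_zero h12 h23) h13
  have e1 : x1 ^ (1 - n) = x1 * x1 ^ (-n) := by
    rw [sub_eq_add_neg, zpow_add₀ h1, zpow_one]
  have e2 : x2 ^ (1 - n) = x2 * x2 ^ (-n) := by
    rw [sub_eq_add_neg, zpow_add₀ h2, zpow_one]
  have e3 : x3 ^ (1 - n) = x3 * x3 ^ (-n) := by
    rw [sub_eq_add_neg, zpow_add₀ h3, zpow_one]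
  rw [e1, e2, e3]
  unfold R
  generalize x1 ^ (-n) = A
  generalize x2 ^ (-n) = B
  generalize x3 ^ (-n) = C
  field_simp
  ring
end
end

section
/- For all integers λ₁, λ₂ the following identity holds in F: ((x₁⁻¹+y⁻¹)(x₂⁻¹+y⁻¹)(x₃⁻¹+y⁻¹)/((x₁⁻¹−x₂⁻¹)(x₂⁻¹−x₃⁻¹)(x₁⁻¹−x₃⁻¹)))·[(x₂^{−λ₁−1}x₃^{−λ₂} − x₂^{−λ₂}x₃^{−λ₁−1})/(x₁⁻¹+y⁻¹) + (x₃^{−λ₁−1}x₁^{−λ₂} − x₃^{−λ₂}x₁^{−λ₁−1})/(x₂⁻¹+y⁻¹) + (x₁^{−λ₁−1}x₂^{−λ₂} − x₁^{−λ₂}x₂^{−λ₁−1})/(x₃⁻¹+y⁻¹)] = (R/(Π·y²))·[x₁²(x₂^{1−λ₂}x₃^{−λ₁} − x₂^{−λ₁}x₃^{1−λ₂})/(x₁+y) + x₂²(x₃^{1−λ₂}x₁^{−λ₁} − x₃^{−λ₁}x₁^{1−λ₂})/(x₂+y) + x₃²(x₁^{1−λ₂}x₂^{−λ₁} − x₁^{−λ₁}x₂^{1−λ₂})/(x₃+y)].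 (The left side is the character of I_{(λ₁,λ₂,0,0)} with all variables inverted, i.e. the character of the dual module I*_{(λ₁,λ₂,0,0)}; the right side is the Su–Zhang atypical character formula at the weight (0, 1−λ₂, 1−λ₁ | 2), the case λ₁+2 = λ₄; so ch I*_{(λ₁,λ₂,0,0)} = ch V(0,−λ₂+1,−λ₁+1|2).) -/
noncomputable section

/-! Since `x⁻¹ + y⁻¹ = (x + y)/(xy)` and `xᵢ⁻¹ - xⱼ⁻¹ = (xⱼ - xᵢ)/(xᵢxⱼ)`, the prefactor on the left
is `-(x₁x₂x₃/y)` times the prefactor `R/(Π y²)` on the right, while each summand of the left bracket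
is `-(y/(x₁x₂x₃))` times the matching summand on the right; the two rescalings cancel. -/

section FractionRing

open MvPolynomial

variable {σ A : Type*} [CommRing A]

lemma algebraMap_ne_zero_of_eval_ne_zero {p : MvPolynomial σ A} (v : σ → A)
    (hp : eval v p ≠ 0) : algebraMap _ (FractionRing (MvPolynomial σ A)) p ≠ 0 := by
  refine (map_ne_zero_iff _ (IsFractionRing.injective _ _)).mpr ?_
  rintro rfl
  exact hp (map_zero _)

lemma algebraMap_X_ne_zero [Nontrivial A] (i : σ) :
    algebraMap (MvPolynomial σ A) (FractionRing (MvPolynomial σ A)) (X i) ≠ 0 := by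
  classical
  exact algebraMap_ne_zero_of_eval_ne_zero (Pi.single i 1) (by simp)

lemma algebraMap_X_add_algebraMap_X_ne_zero [Nontrivial A] {i j : σ} (hij : i ≠ j) :
    algebraMap (MvPolynomial σ A) (FractionRing (MvPolynomial σ A)) (X i)
      + algebraMap (MvPolynomial σ A) (FractionRing (MvPolynomial σ A)) (X j) ≠ 0 := by
  classical
  rw [← map_add]
  exact algebraMap_ne_zero_of_eval_ne_zero (Pi.single i 1) (by simp [hij.symm])

lemma algebraMap_X_sub_algebraMap_X_ne_zero [Nontrivial A] {i j : σ} (hij : i ≠ j) :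
    algebraMap (MvPolynomial σ A) (FractionRing (MvPolynomial σ A)) (X i)
      - algebraMap (MvPolynomial σ A) (FractionRing (MvPolynomial σ A)) (X j) ≠ 0 := by
  classical
  rw [← map_sub]
  exact algebraMap_ne_zero_of_eval_ne_zero (Pi.single i 1) (by simp [hij.symm])

end FractionRing

lemma mul_eq_mul_of_mul_eq_neg_mul {α : Type*} [CommRing α] [IsDomain α] {p b q r c d : α}
    (hc : c ≠ 0) (hd : d ≠ 0) (hp : p * c = -d * q) (hb : b * d = -c * r) : p * b = q * r := by
  refine mul_right_cancel₀ (mul_ne_zero hc hd) ?_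
  linear_combination b * d * hp - d * q * hb

section Identity

variable {K : Type*} [Field K] {x₁ x₂ x₃ y : K}

lemma inv_prefactor_mul_eq (h₁ : x₁ ≠ 0) (h₂ : x₂ ≠ 0) (h₃ : x₃ ≠ 0) (hy : y ≠ 0)
    (h₁₂ : x₁ - x₂ ≠ 0) (h₂₃ : x₂ - x₃ ≠ 0) (h₁₃ : x₁ - x₃ ≠ 0) :
    (x₁⁻¹ + y⁻¹) * (x₂⁻¹ + y⁻¹) * (x₃⁻¹ + y⁻¹) /
        ((x₁⁻¹ - x₂⁻¹) * (x₂⁻¹ - x₃⁻¹) * (x₁⁻¹ - x₃⁻¹)) * y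
      = -(x₁ * x₂ * x₃) *
        ((x₁ + y) * (x₂ + y) * (x₃ + y) / ((x₁ - x₂) * (x₂ - x₃) * (x₁ - x₃) * y ^ 2)) := by
  simp only [inv_add_inv, inv_sub_inv, h₁, h₂, h₃, hy, ne_eq, not_false_eq_true]
  have h₂₁ : x₂ - x₁ ≠ 0 := sub_ne_zero.mpr (sub_ne_zero.mp h₁₂).symm
  have h₃₂ : x₃ - x₂ ≠ 0 := sub_ne_zero.mpr (sub_ne_zero.mp h₂₃).symm
  have h₃₁ : x₃ - x₁ ≠ 0 := sub_ne_zero.mpr (sub_ne_zero.mp h₁₃).symm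
  field_simp
  ring

lemma inv_term_mul_eq {a b c : K} (ha : a ≠ 0) (hb : b ≠ 0) (hc : c ≠ 0) (hy : y ≠ 0)
    (hcy : c + y ≠ 0) (m n : ℤ) :
    (a ^ (-m - 1) * b ^ (-n) - a ^ (-n) * b ^ (-m - 1)) / (c⁻¹ + y⁻¹) * (a * b * c)
      = -y * (c ^ 2 * (a ^ (1 - n) * b ^ (-m) - a ^ (-m) * b ^ (1 - n)) / (c + y)) := by
  have hsucc {t : K} (ht : t ≠ 0) : t ^ (1 - n) = t * t ^ (-n) := by
    rw [sub_eq_neg_add, zpow_add_one₀ ht, mul_comm]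
  rw [zpow_sub_one₀ ha, zpow_sub_one₀ hb, hsucc ha, hsucc hb, inv_add_inv hc hy]
  field_simp
  ring

theorem inv_character_eq (l₁ l₂ : ℤ) (h₁ : x₁ ≠ 0) (h₂ : x₂ ≠ 0) (h₃ : x₃ ≠ 0) (hy : y ≠ 0)
    (h₁y : x₁ + y ≠ 0) (h₂y : x₂ + y ≠ 0) (h₃y : x₃ + y ≠ 0)
    (h₁₂ : x₁ - x₂ ≠ 0) (h₂₃ : x₂ - x₃ ≠ 0) (h₁₃ : x₁ - x₃ ≠ 0) :
    ((x₁⁻¹ + y⁻¹) * (x₂⁻¹ + y⁻¹) * (x₃⁻¹ + y⁻¹) /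
        ((x₁⁻¹ - x₂⁻¹) * (x₂⁻¹ - x₃⁻¹) * (x₁⁻¹ - x₃⁻¹))) *
      ((x₂ ^ (-l₁-1) * x₃ ^ (-l₂) - x₂ ^ (-l₂) * x₃ ^ (-l₁-1)) / (x₁⁻¹ + y⁻¹)
       + (x₃ ^ (-l₁-1) * x₁ ^ (-l₂) - x₃ ^ (-l₂) * x₁ ^ (-l₁-1)) / (x₂⁻¹ + y⁻¹)
       + (x₁ ^ (-l₁-1) * x₂ ^ (-l₂) - x₁ ^ (-l₂) * x₂ ^ (-l₁-1)) / (x₃⁻¹ + y⁻¹))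
    = ((x₁ + y) * (x₂ + y) * (x₃ + y) / ((x₁ - x₂) * (x₂ - x₃) * (x₁ - x₃) * y ^ 2)) *
      (x₁^2 * (x₂ ^ (1-l₂) * x₃ ^ (-l₁) - x₂ ^ (-l₁) * x₃ ^ (1-l₂)) / (x₁ + y)
       + x₂^2 * (x₃ ^ (1-l₂) * x₁ ^ (-l₁) - x₃ ^ (-l₁) * x₁ ^ (1-l₂)) / (x₂ + y)
       + x₃^2 * (x₁ ^ (1-l₂) * x₂ ^ (-l₁) - x₁ ^ (-l₁) * x₂ ^ (1-l₂)) / (x₃ + y)) := by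
  refine mul_eq_mul_of_mul_eq_neg_mul hy (by positivity : x₁ * x₂ * x₃ ≠ 0)
    (inv_prefactor_mul_eq h₁ h₂ h₃ hy h₁₂ h₂₃ h₁₃) ?_
  linear_combination inv_term_mul_eq h₂ h₃ h₁ hy h₁y l₁ l₂ + inv_term_mul_eq h₃ h₁ h₂ hy h₂y l₁ l₂
    + inv_term_mul_eq h₁ h₂ h₃ hy h₃y l₁ l₂

end Identity

/-- `ch I*_{(λ₁,λ₂,0,0)} = ch V(0,−λ₂+1,−λ₁+1|2)`: the character of `I_{(λ₁,λ₂,0,0)}` with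
all variables inverted equals the Su–Zhang atypical character at the weight
`(0, 1−λ₂, 1−λ₁ | 2)`. -/
theorem stmt_6 (l1 l2 : ℤ) :
    ((x1⁻¹ + y⁻¹) * (x2⁻¹ + y⁻¹) * (x3⁻¹ + y⁻¹) /
        ((x1⁻¹ - x2⁻¹) * (x2⁻¹ - x3⁻¹) * (x1⁻¹ - x3⁻¹))) *
      ((x2 ^ (-l1-1) * x3 ^ (-l2) - x2 ^ (-l2) * x3 ^ (-l1-1)) / (x1⁻¹ + y⁻¹)
       + (x3 ^ (-l1-1) * x1 ^ (-l2) - x3 ^ (-l2) * x1 ^ (-l1-1)) / (x2⁻¹ + y⁻¹)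
       + (x1 ^ (-l1-1) * x2 ^ (-l2) - x1 ^ (-l2) * x2 ^ (-l1-1)) / (x3⁻¹ + y⁻¹))
    = (R / (P * y^2)) *
      (x1^2 * (x2 ^ (1-l2) * x3 ^ (-l1) - x2 ^ (-l1) * x3 ^ (1-l2)) / (x1 + y)
       + x2^2 * (x3 ^ (1-l2) * x1 ^ (-l1) - x3 ^ (-l1) * x1 ^ (1-l2)) / (x2 + y)
       + x3^2 * (x1 ^ (1-l2) * x2 ^ (-l1) - x1 ^ (-l1) * x2 ^ (1-l2)) / (x3 + y)) :=
  inv_character_eq l1 l2 (algebraMap_X_ne_zero 0) (algebraMap_X_ne_zero 1)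
    (algebraMap_X_ne_zero 2) (algebraMap_X_ne_zero 3)
    (algebraMap_X_add_algebraMap_X_ne_zero (by decide))
    (algebraMap_X_add_algebraMap_X_ne_zero (by decide))
    (algebraMap_X_add_algebraMap_X_ne_zero (by decide))
    (algebraMap_X_sub_algebraMap_X_ne_zero (by decide))
    (algebraMap_X_sub_algebraMap_X_ne_zero (by decide))
    (algebraMap_X_sub_algebraMap_X_ne_zero (by decide))
end
end

section
/- For all integers λ₁ ≥ λ₂ ≥ λ₃ ≥ 1 and λ₄ ≥ 0 the following identity holds in F: Σ s_{(λ₁−ε₁, λ₂−ε₂, λ₃−ε₃)}·y^{λ₄+ε₁+ε₂+ε₃} = R·(x₁x₂x₃)^{λ₃−1}·a(λ₁−λ₃, λ₂−λ₃, 0)·y^{λ₄}/Π, where the sum is over all ε = (ε₁,ε₂,ε₃) ∈ {0,1}³ such that λ₁−ε₁ ≥ λ₂−ε₂ ≥ λ₃−ε₃. (The left side is the hook Schur function / character of the simple gl(3|1)-summand I_{(λ₁,λ₂,λ₃,1^{λ₄})} of tensor powers of the (3|1)-dimensional super vector space, expanded as Σ_μ s_μ(x)·s_{λ'/μ'}(y);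 the right side is its closed determinant form, equal to the Kac typical character of V(λ₁,λ₂,λ₃|−λ₄).) -/
noncomputable section

lemma hmap : ∀ i, algebraMap (MvPolynomial (Fin 4) ℚ) F (MvPolynomial.X i) ≠ 0 := by
  intro i
  simp only [ne_eq, map_eq_zero_iff _ (IsFractionRing.injective (MvPolynomial (Fin 4) ℚ) F)]
  exact MvPolynomial.X_ne_zero i

lemma hx1 : x1 ≠ 0 := hmap 0
lemma hx2 : x2 ≠ 0 := hmap 1
lemma hx3 : x3 ≠ 0 := hmap 2
lemma hy : y ≠ 0 := hmap 3

lemma a_col12 (t u v : ℤ) (hcol : t + 1 = u) : a t u v = 0 := by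
  have h' : t + 2 = u + 1 := by omega
  simp only [a, Matrix.det_fin_three, Fin.isValue, Matrix.of_apply, Matrix.cons_val',
    Matrix.cons_val_zero, Matrix.empty_val', Matrix.cons_val_fin_one, Matrix.cons_val_one,
    Matrix.head_cons, Matrix.cons_val_two, Nat.succ_eq_add_one, Nat.reduceAdd, Matrix.tail_cons,
    Matrix.head_fin_const, h']
  ring

lemma a_col23 (t u v : ℤ) (hcol : u + 1 = v) : a t u v = 0 := by
  simp only [a, Matrix.det_fin_three, Fin.isValue, Matrix.of_apply, Matrix.cons_val',
    Matrix.cons_val_zero, Matrix.empty_val', Matrix.cons_val_fin_one, Matrix.cons_val_one,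
    Matrix.head_cons, Matrix.cons_val_two, Nat.succ_eq_add_one, Nat.reduceAdd, Matrix.tail_cons,
    Matrix.head_fin_const, hcol]
  ring

set_option maxHeartbeats 2000000 in
lemma key (l1 l2 l3 l4 : ℤ) :
    (∑ ε : Fin 2 × Fin 2 × Fin 2,
        a (l1 - (ε.1 : ℕ)) (l2 - (ε.2.1 : ℕ)) (l3 - (ε.2.2 : ℕ)) *
          y ^ (l4 + (ε.1 : ℕ) + (ε.2.1 : ℕ) + (ε.2.2 : ℕ)))
    = R * (x1*x2*x3) ^ (l3 - 1) * a (l1 - l3) (l2 - l3) 0 * y ^ l4 := by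
  obtain ⟨w, rfl⟩ : ∃ w, l3 = w + 1 := ⟨l3 - 1, by ring⟩
  obtain ⟨t, rfl⟩ : ∃ t, l1 = t + (w + 1) := ⟨l1 - (w + 1), by ring⟩
  obtain ⟨u, rfl⟩ : ∃ u, l2 = u + (w + 1) := ⟨l2 - (w + 1), by ring⟩
  simp only [Fintype.sum_prod_type, Fin.sum_univ_two, Fin.val_zero, Fin.val_one,
    Nat.cast_zero, Nat.cast_one, sub_zero, add_zero]
  simp only [a, R, Matrix.det_fin_three, Fin.isValue, Matrix.of_apply, Matrix.cons_val',
    Matrix.cons_val_zero, Matrix.empty_val', Matrix.cons_val_fin_one, Matrix.cons_val_one,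
    Matrix.head_cons, Matrix.cons_val_two, Nat.succ_eq_add_one, Nat.reduceAdd, Matrix.tail_cons,
    Matrix.head_fin_const, mul_zpow]
  simp only [show t + (w + 1) + 2 = t + w + 3 from by ring,
    show t + (w + 1) - 1 + 2 = t + w + 2 from by ring,
    show u + (w + 1) + 1 = u + w + 2 from by ring,
    show u + (w + 1) - 1 + 1 = u + w + 1 from by ring,
    show w + 1 - 1 = w from by ring,
    show t + (w + 1) - (w + 1) + 2 = t + 2 from by ring,
    show u + (w + 1) - (w + 1) + 1 = u + 1 from by ring]
  simp only [zpow_add₀ hx1, zpow_add₀ hx2, zpow_add₀ hx3, zpow_add₀ hy, zpow_one, zpow_zero,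
    show (2:ℤ) = 1 + 1 from rfl, show (3:ℤ) = 1 + 1 + 1 from rfl]
  generalize x1 ^ t = T1
  generalize x2 ^ t = T2
  generalize x3 ^ t = T3
  generalize x1 ^ u = U1
  generalize x2 ^ u = U2
  generalize x3 ^ u = U3
  generalize x1 ^ w = W1
  generalize x2 ^ w = W2
  generalize x3 ^ w = W3
  generalize y ^ l4 = Y4
  ring

/-- The hook Schur function `Σ_{ε∈{0,1}³, λ₁−ε₁ ≥ λ₂−ε₂ ≥ λ₃−ε₃} s_{(λ−ε)}·y^{λ₄+|ε|}`
equals the Kac typical character `R·(x₁x₂x₃)^{λ₃−1}·a(λ₁−λ₃,λ₂−λ₃,0)·y^{λ₄}/Π`. -/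
theorem stmt_8 (l1 l2 l3 l4 : ℤ) (h21 : l2 ≤ l1) (h32 : l3 ≤ l2) (h3 : 1 ≤ l3)
    (h4 : 0 ≤ l4) :
    (∑ ε : Fin 2 × Fin 2 × Fin 2,
      if l2 - (ε.2.1 : ℕ) ≤ l1 - (ε.1 : ℕ) ∧ l3 - (ε.2.2 : ℕ) ≤ l2 - (ε.2.1 : ℕ) then
        schur (l1 - (ε.1 : ℕ)) (l2 - (ε.2.1 : ℕ)) (l3 - (ε.2.2 : ℕ)) *
          y ^ (l4 + (ε.1 : ℕ) + (ε.2.1 : ℕ) + (ε.2.2 : ℕ))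
      else 0)
    = R * (x1*x2*x3) ^ (l3 - 1) * a (l1 - l3) (l2 - l3) 0 * y ^ l4 / P := by
  have step : ∀ ε : Fin 2 × Fin 2 × Fin 2,
      (if l2 - (ε.2.1 : ℕ) ≤ l1 - (ε.1 : ℕ) ∧ l3 - (ε.2.2 : ℕ) ≤ l2 - (ε.2.1 : ℕ) then
        schur (l1 - (ε.1 : ℕ)) (l2 - (ε.2.1 : ℕ)) (l3 - (ε.2.2 : ℕ)) *
          y ^ (l4 + (ε.1 : ℕ) + (ε.2.1 : ℕ) + (ε.2.2 : ℕ))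
      else 0)
      = a (l1 - (ε.1 : ℕ)) (l2 - (ε.2.1 : ℕ)) (l3 - (ε.2.2 : ℕ)) *
          y ^ (l4 + (ε.1 : ℕ) + (ε.2.1 : ℕ) + (ε.2.2 : ℕ)) / P := by
    intro ε
    have he1 : (ε.1 : ℕ) = 0 ∨ (ε.1 : ℕ) = 1 := by omega
    have he2 : (ε.2.1 : ℕ) = 0 ∨ (ε.2.1 : ℕ) = 1 := by omega
    have he3 : (ε.2.2 : ℕ) = 0 ∨ (ε.2.2 : ℕ) = 1 := by omega
    split_ifs with hcond
    · rw [schur, div_mul_eq_mul_div]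
    · rw [not_and_or] at hcond
      rcases hcond with hc1 | hc2
      · push_neg at hc1
        have h12 : (l1 - (ε.1 : ℕ)) + 1 = l2 - (ε.2.1 : ℕ) := by omega
        rw [a_col12 _ _ _ h12]
        simp
      · push_neg at hc2
        have h23 : (l2 - (ε.2.1 : ℕ)) + 1 = l3 - (ε.2.2 : ℕ) := by omega
        rw [a_col23 _ _ _ h23]
        simp
  calc (∑ ε : Fin 2 × Fin 2 × Fin 2,
      if l2 - (ε.2.1 : ℕ) ≤ l1 - (ε.1 : ℕ) ∧ l3 - (ε.2.2 : ℕ) ≤ l2 - (ε.2.1 : ℕ) then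
        schur (l1 - (ε.1 : ℕ)) (l2 - (ε.2.1 : ℕ)) (l3 - (ε.2.2 : ℕ)) *
          y ^ (l4 + (ε.1 : ℕ) + (ε.2.1 : ℕ) + (ε.2.2 : ℕ))
      else 0)
      = ∑ ε : Fin 2 × Fin 2 × Fin 2,
          a (l1 - (ε.1 : ℕ)) (l2 - (ε.2.1 : ℕ)) (l3 - (ε.2.2 : ℕ)) *
            y ^ (l4 + (ε.1 : ℕ) + (ε.2.1 : ℕ) + (ε.2.2 : ℕ)) / P :=
        Finset.sum_congr rfl fun ε _ => step ε
    _ = (∑ ε : Fin 2 × Fin 2 × Fin 2,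
          a (l1 - (ε.1 : ℕ)) (l2 - (ε.2.1 : ℕ)) (l3 - (ε.2.2 : ℕ)) *
            y ^ (l4 + (ε.1 : ℕ) + (ε.2.1 : ℕ) + (ε.2.2 : ℕ))) / P :=
        (Finset.sum_div _ _ _).symm
    _ = R * (x1*x2*x3) ^ (l3 - 1) * a (l1 - l3) (l2 - l3) 0 * y ^ l4 / P := by
        rw [key]
end
end
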